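/- Let B ∈ M_{p×p}(ℝ) and let f : ℝ → ℂ^p be Z-almost automorphic. Let x : ℝ → ℂ^p be a bounded solution of the differential equation with piecewise constant argument x'(t) = B x(⌊t⌋) + f(t), i.e. a bounded continuous function satisfying x(t) = x(s) + ∫_s^t (B x(⌊u⌋) + f(u)) du for all s ≤ t. Then x is almost automorphic (in Bochner's sense) if and only if the sequence n ↦ x(n), n ∈ ℤ, is discrete almost automorphic. -/

import Mathlib

open MeasureTheory Filter Topology

/-- Bounded, piecewise continuous: continuous on ℝ ∖ ℤ with finite one-sided
limits at every integer. -/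
def BddPC (p : ℕ) (f : ℝ → Fin p → ℂ) : Prop :=
  (∃ C : ℝ, ∀ t : ℝ, ‖f t‖ ≤ C) ∧
  ContinuousOn f {t : ℝ | ∀ n : ℤ, t ≠ (n : ℝ)} ∧
  ∀ n : ℤ, (∃ L : Fin p → ℂ, Tendsto f (𝓝[<] (n : ℝ)) (𝓝 L)) ∧
           (∃ R : Fin p → ℂ, Tendsto f (𝓝[>] (n : ℝ)) (𝓝 R))

/-- `ℤ`-almost automorphic functions. -/
def ZAlmostAutomorphic (p : ℕ) (f : ℝ → Fin p → ℂ) : Prop :=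
  BddPC p f ∧
  ∀ s : ℕ → ℤ, ∃ (φ : ℕ → ℕ) (g : ℝ → Fin p → ℂ), StrictMono φ ∧
    (∀ t : ℝ, Tendsto (fun n => f (t + (s (φ n) : ℝ))) atTop (𝓝 (g t))) ∧
    (∀ t : ℝ, Tendsto (fun n => g (t - (s (φ n) : ℝ))) atTop (𝓝 (f t)))

/-- Almost automorphic functions in the sense of Bochner. -/
def AlmostAutomorphic (p : ℕ) (f : ℝ → Fin p → ℂ) : Prop :=
  (∃ C : ℝ, ∀ t : ℝ, ‖f t‖ ≤ C) ∧ Continuous f ∧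
  ∀ s : ℕ → ℝ, ∃ (φ : ℕ → ℕ) (g : ℝ → Fin p → ℂ), StrictMono φ ∧
    (∀ t : ℝ, Tendsto (fun n => f (t + s (φ n))) atTop (𝓝 (g t))) ∧
    (∀ t : ℝ, Tendsto (fun n => g (t - s (φ n))) atTop (𝓝 (f t)))

/-- Discrete almost automorphic sequences `ℤ → ℂ^p`. -/
def DiscreteAA (p : ℕ) (f : ℤ → Fin p → ℂ) : Prop :=
  ∀ s : ℕ → ℤ, ∃ (φ : ℕ → ℕ) (g : ℤ → Fin p → ℂ), StrictMono φ ∧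
    (∀ k : ℤ, Tendsto (fun n => f (k + s (φ n))) atTop (𝓝 (g k))) ∧
    (∀ k : ℤ, Tendsto (fun n => g (k - s (φ n))) atTop (𝓝 (f k)))

/-- Multiplication of a complex vector by a real matrix. -/
noncomputable def RMulVec {p : ℕ} (B : Matrix (Fin p) (Fin p) ℝ) (x : Fin p → ℂ) :
    Fin p → ℂ :=
  fun i => ∑ j, ((B i j : ℝ) : ℂ) * x j

/-!
Write `s n = ⌊s n⌋ + Int.fract (s n)` and pass to a subsequence along which the fractional parts
converge to some `σ`. On each step `[k, k + 1]` the solution is explicitly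
`x k + (t - k) • B (x k) + ∫ f`, so convergence of the integer samples `x (k + ⌊s n⌋)` and bounded
pointwise convergence of `f (· + ⌊s n⌋)` force locally uniform convergence of `x (· + ⌊s n⌋)` to a
continuous limit `Y`; symmetrically `Y (· - ⌊s n⌋) → x`. Local uniformity absorbs the converging
fractional parts, so `t ↦ Y (t + σ)` is the limit along the real sequence `s`.
-/

open Set

theorem TendstoUniformlyOn.union {ι α β : Type*} [UniformSpace β] {F : ι → α → β} {f : α → β}
    {p : Filter ι} {s t : Set α} (hs : TendstoUniformlyOn F f p s)
    (ht : TendstoUniformlyOn F f p t) : TendstoUniformlyOn F f p (s ∪ t) := by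
  rw [tendstoUniformlyOn_iff_tendsto] at hs ht ⊢
  rw [← sup_principal, prod_sup]
  exact hs.sup ht

theorem tendstoLocallyUniformly_of_forall_tendstoUniformlyOn_Icc_intCast {ι β : Type*}
    [UniformSpace β] {F : ι → ℝ → β} {f : ℝ → β} {p : Filter ι}
    (h : ∀ k : ℤ, TendstoUniformlyOn F f p (Icc (k : ℝ) (k + 1))) :
    TendstoLocallyUniformly F f p := by
  refine tendstoLocallyUniformly_of_forall_exists_nhds fun t => ⟨Icc (⌊t⌋ - 1 : ℝ) (⌊t⌋ + 1),
    Icc_mem_nhds (by linarith [Int.floor_le t]) (Int.lt_floor_add_one t), ?_⟩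
  rw [← Icc_union_Icc_eq_Icc (by linarith) (by linarith)]
  refine .union ?_ (h ⌊t⌋)
  simpa using h (⌊t⌋ - 1)

theorem ContinuousOn.aestronglyMeasurable_of_countable_compl {α β : Type*} [MeasurableSpace α]
    [TopologicalSpace α] [TopologicalSpace β] [SecondCountableTopologyEither α β]
    [OpensMeasurableSpace α] [MeasurableSingletonClass α] [TopologicalSpace.PseudoMetrizableSpace β]
    {μ : Measure α} [NullSingletonClass μ] {f : α → β} {s : Set α} (hf : ContinuousOn f s)
    (hs : sᶜ.Countable) : AEStronglyMeasurable f μ := by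
  rw [← Measure.restrict_eq_self_of_ae_mem (hs.measure_zero μ)]
  exact hf.aestronglyMeasurable hs.measurableSet.of_compl

theorem tendsto_comp_add_of_tendstoLocallyUniformly_comp_add_intCast {β : Type*} [UniformSpace β]
    {x Y : ℝ → β} (hxc : Continuous x) (hYc : Continuous Y) {m : ℕ → ℤ}
    (hxY : TendstoLocallyUniformly (fun n u => x (u + m n)) Y atTop)
    (hYx : TendstoLocallyUniformly (fun n u => Y (u - m n)) x atTop)
    {τ : ℕ → ℝ} {σ : ℝ} (hτ : Tendsto τ atTop (𝓝 σ)) (t : ℝ) :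
    Tendsto (fun n => x (t + (m n + τ n))) atTop (𝓝 (Y (t + σ))) ∧
      Tendsto (fun n => Y (t - (m n + τ n) + σ)) atTop (𝓝 (x t)) := by
  have hθ : Tendsto (fun n => t + σ - τ n) atTop (𝓝 t) := by
    simpa using (tendsto_const_nhds (x := t + σ)).sub hτ
  refine ⟨(hxY.tendsto_comp hYc.continuousAt (tendsto_const_nhds.add hτ)).congr fun n => ?_,
    (hYx.tendsto_comp hxc.continuousAt hθ).congr fun n => ?_⟩ <;> ring_nf

variable {E : Type*} [NormedAddCommGroup E]

theorem intervalIntegrable_of_norm_le {F : ℝ → E} {C : ℝ}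
    (hFm : AEStronglyMeasurable F volume) (hFb : ∀ w, ‖F w‖ ≤ C) (a b : ℝ) :
    IntervalIntegrable F volume a b :=
  (intervalIntegrable_const (c := C)).mono_fun' hFm.restrict (ae_of_all _ hFb)

theorem aestronglyMeasurable_and_norm_le_of_tendsto {F : ℕ → ℝ → E} {G : ℝ → E} {C : ℝ}
    (hFm : ∀ n, AEStronglyMeasurable (F n) volume) (hFb : ∀ n w, ‖F n w‖ ≤ C)
    (hFG : ∀ w, Tendsto (fun n => F n w) atTop (𝓝 (G w))) :
    AEStronglyMeasurable G volume ∧ ∀ w, ‖G w‖ ≤ C :=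
  ⟨aestronglyMeasurable_of_tendsto_ae atTop hFm (ae_of_all _ hFG),
    fun w => le_of_tendsto' (hFG w).norm fun n => hFb n w⟩

theorem tendsto_intervalIntegral_of_norm_le [NormedSpace ℝ E] {F : ℕ → ℝ → E} {G : ℝ → E} {C : ℝ}
    (hFm : ∀ n, AEStronglyMeasurable (F n) volume) (hFb : ∀ n w, ‖F n w‖ ≤ C)
    (hFG : ∀ w, Tendsto (fun n => F n w) atTop (𝓝 (G w))) (a b : ℝ) :
    Tendsto (fun n => ∫ w in a..b, F n w) atTop (𝓝 (∫ w in a..b, G w)) :=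
  intervalIntegral.tendsto_integral_filter_of_dominated_convergence (fun _ => C)
    (.of_forall fun n => (hFm n).restrict) (.of_forall fun n => ae_of_all _ fun w _ => hFb n w)
    intervalIntegrable_const (ae_of_all _ fun w _ => hFG w)

theorem tendsto_intervalIntegral_norm_sub_of_norm_le {F : ℕ → ℝ → E} {G : ℝ → E} {C : ℝ}
    (hFm : ∀ n, AEStronglyMeasurable (F n) volume) (hFb : ∀ n w, ‖F n w‖ ≤ C)
    (hFG : ∀ w, Tendsto (fun n => F n w) atTop (𝓝 (G w))) (a b : ℝ) :
    Tendsto (fun n => ∫ w in a..b, ‖F n w - G w‖) atTop (𝓝 0) := by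
  obtain ⟨hGm, hGb⟩ := aestronglyMeasurable_and_norm_le_of_tendsto hFm hFb hFG
  simpa using tendsto_intervalIntegral_of_norm_le (G := fun _ => (0 : ℝ)) (C := C + C)
    (fun n => ((hFm n).sub hGm).norm)
    (fun n w => by simpa using (norm_sub_le _ _).trans (add_le_add (hFb n w) (hGb w)))
    (fun w => by simpa using ((hFG w).sub_const (G w)).norm) a b

variable [NormedSpace ℝ E]

/-- `y` solves `y' t = L (y ⌊t⌋) + F t`, written out on each step `[k, k + 1]`. -/
def IsDepcaSolution (L : E → E) (F y : ℝ → E) : Prop :=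
  ∀ (k : ℤ) (u : ℝ), u ∈ Icc (k : ℝ) (k + 1) →
    y u = y k + (u - k) • L (y k) + ∫ w in (k : ℝ)..u, F w

variable {L : E → E}

theorem isDepcaSolution_of_integral_eq [CompleteSpace E] {F y : ℝ → E}
    (hF : ∀ a b, IntervalIntegrable F volume a b)
    (hy : ∀ s t : ℝ, s ≤ t → y t = y s + ∫ u in s..t, (L (y ⌊u⌋) + F u)) :
    IsDepcaSolution L F y := by
  intro k u ⟨hku, huk⟩
  have hae : ∀ᵐ w, w ∈ uIoc (k : ℝ) u → L (y ⌊w⌋) + F w = L (y k) + F w := by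
    filter_upwards [Measure.ae_ne volume ((k : ℝ) + 1)] with w hw hwI
    rw [uIoc_of_le hku] at hwI
    rw [Int.floor_eq_iff.2 ⟨hwI.1.le, (hwI.2.trans huk).lt_of_ne hw⟩]
  rw [hy k u hku, intervalIntegral.integral_congr_ae hae,
    intervalIntegral.integral_add intervalIntegrable_const (hF _ _),
    intervalIntegral.integral_const, add_assoc]

theorem IsDepcaSolution.comp_add_intCast {F y : ℝ → E} (hy : IsDepcaSolution L F y) (j : ℤ) :
    IsDepcaSolution L (fun w => F (w + j)) (fun u => y (u + j)) := by
  intro k u hu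
  have := hy (k + j) (u + j) (by push_cast; constructor <;> linarith [hu.1, hu.2])
  rw [intervalIntegral.integral_comp_add_right]
  push_cast at this ⊢
  rwa [add_sub_add_right_eq_sub] at this

theorem IsDepcaSolution.norm_sub_le {F G y Y : ℝ → E}
    (hy : IsDepcaSolution L F y) (hY : IsDepcaSolution L G Y) {k : ℤ}
    (hF : IntervalIntegrable F volume k (k + 1)) (hG : IntervalIntegrable G volume k (k + 1))
    {u : ℝ} (hu : u ∈ Icc (k : ℝ) (k + 1)) :
    ‖y u - Y u‖ ≤ ‖y k - Y k‖ + ‖L (y k) - L (Y k)‖ + ∫ w in (k : ℝ)..k + 1, ‖F w - G w‖ := by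
  have hsub : uIcc (k : ℝ) u ⊆ uIcc (k : ℝ) (k + 1) :=
    uIcc_subset_uIcc left_mem_uIcc (mem_uIcc_of_le hu.1 hu.2)
  have hsplit : y u - Y u =
      (y k - Y k) + (u - k) • (L (y k) - L (Y k)) + ∫ w in (k : ℝ)..u, (F w - G w) := by
    rw [hy k u hu, hY k u hu, intervalIntegral.integral_sub (hF.mono_set hsub) (hG.mono_set hsub),
      smul_sub]
    abel
  have hθ : ‖(u - k : ℝ)‖ ≤ 1 := by
    rw [Real.norm_eq_abs, abs_le]
    constructor <;> linarith [hu.1, hu.2]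
  have hint : ‖∫ w in (k : ℝ)..u, (F w - G w)‖ ≤ ∫ w in (k : ℝ)..k + 1, ‖F w - G w‖ :=
    (intervalIntegral.norm_integral_le_integral_norm hu.1).trans
      (intervalIntegral.integral_mono_interval le_rfl hu.1 hu.2
        (ae_of_all _ fun _ => norm_nonneg _) (hF.sub hG).norm)
  calc ‖y u - Y u‖
      ≤ ‖y k - Y k‖ + ‖(u - k) • (L (y k) - L (Y k))‖ + ‖∫ w in (k : ℝ)..u, (F w - G w)‖ := by
        rw [hsplit]; exact norm_add₃_le
    _ ≤ _ := by
        gcongr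
        rw [norm_smul]
        exact mul_le_of_le_one_left (norm_nonneg _) hθ

theorem tendstoLocallyUniformly_of_isDepcaSolution (hL : Continuous L)
    {F : ℕ → ℝ → E} {G : ℝ → E} {y : ℕ → ℝ → E} {Y : ℝ → E} {C : ℝ}
    (hy : ∀ n, IsDepcaSolution L (F n) (y n)) (hY : IsDepcaSolution L G Y)
    (hyY : ∀ k : ℤ, Tendsto (fun n => y n k) atTop (𝓝 (Y k)))
    (hFm : ∀ n, AEStronglyMeasurable (F n) volume) (hFb : ∀ n w, ‖F n w‖ ≤ C)
    (hFG : ∀ w, Tendsto (fun n => F n w) atTop (𝓝 (G w))) :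
    TendstoLocallyUniformly y Y atTop := by
  obtain ⟨hGm, hGb⟩ := aestronglyMeasurable_and_norm_le_of_tendsto hFm hFb hFG
  refine tendstoLocallyUniformly_of_forall_tendstoUniformlyOn_Icc_intCast fun k => ?_
  have hbound : Tendsto (fun n => ‖y n k - Y k‖ + ‖L (y n k) - L (Y k)‖ +
      ∫ w in (k : ℝ)..k + 1, ‖F n w - G w‖) atTop (𝓝 0) := by
    simpa using (((hyY k).sub_const (Y k)).norm.add
      (((hL.tendsto _).comp (hyY k)).sub_const (L (Y k))).norm).add
      (tendsto_intervalIntegral_norm_sub_of_norm_le hFm hFb hFG k (k + 1))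
  rw [Metric.tendstoUniformlyOn_iff]
  intro ε hε
  filter_upwards [hbound.eventually (gt_mem_nhds hε)] with n hn u hu
  rw [dist_comm, dist_eq_norm]
  exact ((hy n).norm_sub_le hY (intervalIntegrable_of_norm_le (hFm n) (hFb n) _ _)
    (intervalIntegrable_of_norm_le hGm hGb _ _) hu).trans_lt hn

theorem exists_isDepcaSolution_of_tendsto (hL : Continuous L)
    {F : ℕ → ℝ → E} {G : ℝ → E} {y : ℕ → ℝ → E} {a : ℤ → E} {C : ℝ}
    (hy : ∀ n, IsDepcaSolution L (F n) (y n))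
    (hya : ∀ k : ℤ, Tendsto (fun n => y n k) atTop (𝓝 (a k)))
    (hFm : ∀ n, AEStronglyMeasurable (F n) volume) (hFb : ∀ n w, ‖F n w‖ ≤ C)
    (hFG : ∀ w, Tendsto (fun n => F n w) atTop (𝓝 (G w))) :
    ∃ Y, IsDepcaSolution L G Y ∧ ∀ k : ℤ, Y k = a k := by
  set Y : ℝ → E := fun u => a ⌊u⌋ + (u - ⌊u⌋) • L (a ⌊u⌋) + ∫ w in (⌊u⌋ : ℝ)..u, G w
  have hYa : ∀ k : ℤ, Y k = a k := by simp [Y]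
  -- the explicit pieces of `Y` glue at `k + 1`, since both sides are limits of `y n (k + 1)`
  have hstep : ∀ k : ℤ, a (k + 1) = a k + L (a k) + ∫ w in (k : ℝ)..k + 1, G w := by
    intro k
    refine tendsto_nhds_unique (by simpa using hya (k + 1)) ?_
    refine (((hya k).add ((hL.tendsto _).comp (hya k))).add
      (tendsto_intervalIntegral_of_norm_le hFm hFb hFG k (k + 1))).congr fun n => ?_
    simpa using ((hy n) k (k + 1) ⟨by linarith, le_rfl⟩).symm
  refine ⟨Y, fun k u hu => ?_, hYa⟩
  rw [hYa]
  rcases hu.2.lt_or_eq with hlt | rfl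
  · simp only [Y, Int.floor_eq_iff.2 ⟨hu.1, hlt⟩]
  · simpa [Y] using hstep k

theorem exists_tendstoLocallyUniformly_comp_add_intCast (hL : Continuous L) {f x : ℝ → E}
    (hx : IsDepcaSolution L f x) (hxc : Continuous x) {C : ℝ}
    (hfm : AEStronglyMeasurable f volume) (hfb : ∀ w, ‖f w‖ ≤ C)
    {m : ℕ → ℤ} {a : ℤ → E} {g : ℝ → E}
    (hxa : ∀ k : ℤ, Tendsto (fun n => x ((k + m n : ℤ) : ℝ)) atTop (𝓝 (a k)))
    (hax : ∀ k : ℤ, Tendsto (fun n => a (k - m n)) atTop (𝓝 (x k)))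
    (hfg : ∀ w, Tendsto (fun n => f (w + m n)) atTop (𝓝 (g w)))
    (hgf : ∀ w, Tendsto (fun n => g (w - m n)) atTop (𝓝 (f w))) :
    ∃ Y : ℝ → E, Continuous Y ∧ TendstoLocallyUniformly (fun n u => x (u + m n)) Y atTop ∧
      TendstoLocallyUniformly (fun n u => Y (u - m n)) x atTop := by
  have hFm : ∀ n, AEStronglyMeasurable (fun w => f (w + m n)) volume := fun n =>
    hfm.comp_measurePreserving (measurePreserving_add_right volume _)
  obtain ⟨hgm, hgb⟩ := aestronglyMeasurable_and_norm_le_of_tendsto hFm (fun _ _ => hfb _) hfg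
  have hya : ∀ k : ℤ, Tendsto (fun n => x (k + m n)) atTop (𝓝 (a k)) := by simpa using hxa
  have hy n := hx.comp_add_intCast (m n)
  obtain ⟨Y, hY, hYa⟩ := exists_isDepcaSolution_of_tendsto hL hy hya hFm (fun _ _ => hfb _) hfg
  have hfwd := tendstoLocallyUniformly_of_isDepcaSolution hL hy hY (by simpa [hYa] using hya) hFm
    (fun _ _ => hfb _) hfg
  have hz n : IsDepcaSolution L (fun w => g (w - m n)) (fun u => Y (u - m n)) := by
    simpa [sub_eq_add_neg] using hY.comp_add_intCast (-m n)
  have hzx (k : ℤ) : Tendsto (fun n => Y (k - m n)) atTop (𝓝 (x k)) := by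
    simpa [← Int.cast_sub, hYa] using hax k
  refine ⟨Y, hfwd.continuous (.of_forall fun n => hxc.comp (continuous_add_const _)), hfwd,
    tendstoLocallyUniformly_of_isDepcaSolution hL hz hx hzx
      (fun n => hgm.comp_measurePreserving (measurePreserving_sub_right volume _))
      (fun _ _ => hgb _) hgf⟩

theorem BddPC.aestronglyMeasurable {p : ℕ} {f : ℝ → Fin p → ℂ} (hf : BddPC p f) :
    AEStronglyMeasurable f volume := by
  refine hf.2.1.aestronglyMeasurable_of_countable_compl
    ((countable_range (Int.cast : ℤ → ℝ)).mono fun t ht => ?_)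
  simpa [eq_comm] using ht

theorem continuous_rMulVec {p : ℕ} (B : Matrix (Fin p) (Fin p) ℝ) : Continuous (RMulVec B) :=
  continuous_pi fun _ => continuous_finsetSum _ fun j _ => continuous_const.mul (continuous_apply j)

theorem AlmostAutomorphic.discreteAA_intCast {p : ℕ} {x : ℝ → Fin p → ℂ}
    (hx : AlmostAutomorphic p x) : DiscreteAA p (fun n : ℤ => x n) := by
  intro s
  obtain ⟨φ, g, hφ, hxg, hgx⟩ := hx.2.2 fun n => s n
  exact ⟨φ, fun k => g k, hφ, fun k => by simpa using hxg k, fun k => by simpa using hgx k⟩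

/-- A bounded solution `x` of the DEPCA `x'(t) = B x(⌊t⌋) + f(t)` with `f`
`ℤ`-almost automorphic is almost automorphic if and only if its restriction to `ℤ`
is discrete almost automorphic. -/
theorem bounded_depca_solution_aa_iff_discrete_aa_pure {p : ℕ}
    (B : Matrix (Fin p) (Fin p) ℝ)
    (f : ℝ → Fin p → ℂ) (hf : ZAlmostAutomorphic p f)
    (x : ℝ → Fin p → ℂ) (hxb : ∃ C : ℝ, ∀ t : ℝ, ‖x t‖ ≤ C) (hxc : Continuous x)
    (hx : ∀ s t : ℝ, s ≤ t →
      x t = x s + ∫ u in s..t, (RMulVec B (x ((⌊u⌋ : ℤ) : ℝ)) + f u)) :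
    AlmostAutomorphic p x ↔ DiscreteAA p (fun n : ℤ => x (n : ℝ)) := by
  obtain ⟨hfpc, hfZ⟩ := hf
  obtain ⟨Cf, hfb⟩ := hfpc.1
  have hsol : IsDepcaSolution (RMulVec B) f x :=
    isDepcaSolution_of_integral_eq (intervalIntegrable_of_norm_le hfpc.aestronglyMeasurable hfb) hx
  refine ⟨AlmostAutomorphic.discreteAA_intCast, fun hd => ⟨hxb, hxc, fun s => ?_⟩⟩
  obtain ⟨σ, -, φ₁, hφ₁, hσ⟩ := isCompact_Icc.tendsto_subseq fun n =>
    (⟨Int.fract_nonneg (s n), (Int.fract_lt_one (s n)).le⟩ : Int.fract (s n) ∈ Icc (0 : ℝ) 1)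
  obtain ⟨φ₂, a, hφ₂, hxa, hax⟩ := hd fun n => ⌊s (φ₁ n)⌋
  obtain ⟨φ₃, g, hφ₃, hfg, hgf⟩ := hfZ fun n => ⌊s (φ₁ (φ₂ n))⌋
  obtain ⟨Y, hYc, hfwd, hbwd⟩ := exists_tendstoLocallyUniformly_comp_add_intCast
    (continuous_rMulVec B) hsol hxc hfpc.aestronglyMeasurable hfb
    (m := fun n => ⌊s (φ₁ (φ₂ (φ₃ n)))⌋) (fun k => (hxa k).comp hφ₃.tendsto_atTop)
    (fun k => (hax k).comp hφ₃.tendsto_atTop) hfg hgf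
  have hτ : Tendsto (fun n => Int.fract (s (φ₁ (φ₂ (φ₃ n))))) atTop (𝓝 σ) :=
    hσ.comp (hφ₂.comp hφ₃).tendsto_atTop
  have hlim := tendsto_comp_add_of_tendstoLocallyUniformly_comp_add_intCast hxc hYc hfwd hbwd hτ
  refine ⟨fun n => φ₁ (φ₂ (φ₃ n)), fun t => Y (t + σ), hφ₁.comp (hφ₂.comp hφ₃),
    fun t => ?_, fun t => ?_⟩
  · simpa only [Int.floor_add_fract] using (hlim t).1
  · simpa only [Int.floor_add_fract] using (hlim t).2
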